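/- arXiv:1408.1809 — 9 statements merged into one kernel-verified Lean document; each statement's English description precedes it below -/
import Mathlib

section
/- Exogenization preserves marginal models: if D is a DAG with vertices V ∪ {u} and r(D,u) is the exogenized DAG at u, then M(D, V) = M(r(D,u), V). -/
/-- A witness that the distribution `P` of the observed variables (indexed by `V`) lies in
the marginal DAG model `M(D, V)` of the DAG `D` with edge relation `Edge` on vertex set
`V ⊕ U` (observed `V`, latent `U`): there are a probability space, latent state-spaces
`𝒴 u` (arbitrary measurable spaces), observed variables `X v`, latent variables `Y u` and
independent real-valued error variables `err w`, such that every variable is measurable with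
respect to the σ-algebra generated by its graphical parents' variables and its own error
(the structural equation property for `D`), and the joint distribution of `(X v)_{v ∈ V}`
is `P`. -/
structure MarginWitness {V U : Type} (Edge : V ⊕ U → V ⊕ U → Prop) (𝒳 : V → Type)
    [∀ v, MeasurableSpace (𝒳 v)] (P : MeasureTheory.Measure (∀ v, 𝒳 v)) where
  Ω : Type
  [mΩ : MeasurableSpace Ω]
  μ : MeasureTheory.Measure Ω
  prob : MeasureTheory.IsProbabilityMeasure μ
  X : ∀ v : V, Ω → 𝒳 v
  𝒴 : U → Type
  [m𝒴 : ∀ u, MeasurableSpace (𝒴 u)]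
  Y : ∀ u : U, Ω → 𝒴 u
  err : V ⊕ U → Ω → ℝ
  indep : ProbabilityTheory.iIndepFun err μ
  sep : ∀ w : V ⊕ U,
      Sum.elim (fun v => MeasurableSpace.comap (X v) inferInstance)
          (fun u => MeasurableSpace.comap (Y u) inferInstance) w ≤
        (⨆ p ∈ {p | Edge p w},
          Sum.elim (fun v => MeasurableSpace.comap (X v) inferInstance)
            (fun u => MeasurableSpace.comap (Y u) inferInstance) p) ⊔
          MeasurableSpace.comap (err w) inferInstance
  marg : MeasureTheory.Measure.map (fun ω v => X v ω) μ = P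

/-- `P` lies in the marginal DAG model `M(D, V)`, where `D` has observed vertices `V` and
latent vertices `U`. -/
def InMarginalModel {V U : Type} (Edge : V ⊕ U → V ⊕ U → Prop) (𝒳 : V → Type)
    [∀ v, MeasurableSpace (𝒳 v)] (P : MeasureTheory.Measure (∀ v, 𝒳 v)) : Prop :=
  Nonempty (MarginWitness Edge 𝒳 P)

/-- The edge relation of the exogenized DAG `r(D, u)` for the latent vertex `u = Sum.inr ()`:
all edges into `u` are deleted, and every parent of `u` is joined to every child of `u`. -/
def exogenizedEdge {V : Type} (Edge : V ⊕ Unit → V ⊕ Unit → Prop)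
    (a b : V ⊕ Unit) : Prop :=
  b ≠ Sum.inr () ∧ (Edge a b ∨ (Edge a (Sum.inr ()) ∧ Edge (Sum.inr ()) b))

/-! Both directions keep the probability space, the observed variables and the errors, and
replace only the latent variable at `u`. From `D` to `r(D, u)` it is replaced by its own error
`err u`: a child of `u` sees `u` only through the parents of `u` and `err u`, and these are
parents of the child in `r(D, u)`. Conversely it is replaced by the tuple of its observed
`D`-parents together with its old value, which is a function of `err u` alone since `u` has no
parents in `r(D, u)`. Since only the generated σ-algebras matter, the combinatorial core holds
for families in any complete lattice. -/

open MeasureTheory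

/-- `σ w` plays the σ-algebra generated by the variable at `w` and `ε w` that of its error, as in
the field `sep` of `MarginWitness`. -/
def IsStructuralFamily {ι L : Type*} [CompleteLattice L] (Edge : ι → ι → Prop) (σ ε : ι → L) :
    Prop :=
  ∀ w, σ w ≤ (⨆ p ∈ {p | Edge p w}, σ p) ⊔ ε w

namespace IsStructuralFamily

variable {V : Type} {L : Type*} [CompleteLattice L] {Edge : V ⊕ Unit → V ⊕ Unit → Prop}
  {σ ε : V ⊕ Unit → L}

theorem exogenize (hloop : ¬ Edge (.inr ()) (.inr ())) (h : IsStructuralFamily Edge σ ε) :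
    IsStructuralFamily (exogenizedEdge Edge) (Sum.elim (σ ∘ .inl) fun _ => ε (.inr ())) ε := by
  rintro (v | ⟨⟩)
  · refine (h (.inl v)).trans (sup_le_sup_right (iSup₂_le fun p hpv => ?_) _)
    rcases p with v' | ⟨⟩
    · exact le_iSup₂_of_le (.inl v') ⟨Sum.inl_ne_inr, .inl hpv⟩ le_rfl
    refine (h (.inr ())).trans (sup_le (iSup₂_le fun q hqu => ?_) ?_)
    · rcases q with v'' | ⟨⟩
      · exact le_iSup₂_of_le (.inl v'') ⟨Sum.inl_ne_inr, .inr ⟨hqu, hpv⟩⟩ le_rfl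
      · exact absurd hqu hloop
    · exact le_iSup₂_of_le (.inr ()) ⟨Sum.inl_ne_inr, .inl hpv⟩ le_rfl
  · exact le_sup_right

theorem of_exogenize (h : IsStructuralFamily (exogenizedEdge Edge) σ ε) :
    IsStructuralFamily Edge (Sum.elim (σ ∘ .inl) fun _ =>
      (⨆ v ∈ {v | Edge (.inl v) (.inr ())}, σ (.inl v)) ⊔ σ (.inr ())) ε := by
  set σ' : V ⊕ Unit → L := Sum.elim (σ ∘ .inl) fun _ =>
    (⨆ v ∈ {v | Edge (.inl v) (.inr ())}, σ (.inl v)) ⊔ σ (.inr ())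
  have hσσ' : ∀ w, σ w ≤ σ' w := by
    rintro (v | ⟨⟩)
    exacts [le_rfl, le_sup_right]
  have hparent_u : ∀ p, Edge p (.inr ()) → σ p ≤ σ' (.inr ()) := by
    rintro (v | ⟨⟩) hpu
    exacts [le_sup_of_le_left (le_iSup₂_of_le v hpu le_rfl), le_sup_right]
  -- in `r(D, u)` the vertex `u` has no parents
  have hu : σ (.inr ()) ≤ ε (.inr ()) :=
    (h _).trans (sup_le (iSup₂_le fun _ hp => absurd rfl hp.1) le_rfl)
  rintro (v | ⟨⟩)
  · refine (h (.inl v)).trans (sup_le_sup_right (iSup₂_le fun p hpv => ?_) _)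
    rcases hpv.2 with hpv | ⟨hpu, huv⟩
    · exact le_iSup₂_of_le p hpv (hσσ' p)
    · exact le_iSup₂_of_le (.inr ()) huv (hparent_u p hpu)
  · refine sup_le (le_sup_of_le_left ?_) (hu.trans le_sup_right)
    exact iSup₂_le fun v hvu => le_iSup₂_of_le (.inl v) hvu le_rfl

end IsStructuralFamily

namespace MarginWitness

attribute [instance] m𝒴

variable {V U : Type} {Edge : V ⊕ U → V ⊕ U → Prop} {𝒳 : V → Type}
  [∀ v, MeasurableSpace (𝒳 v)] {P : Measure (∀ v, 𝒳 v)} (W : MarginWitness Edge 𝒳 P)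

abbrev vertexSigma : V ⊕ U → MeasurableSpace W.Ω :=
  Sum.elim (fun v => MeasurableSpace.comap (W.X v) inferInstance)
    fun u => MeasurableSpace.comap (W.Y u) inferInstance

abbrev errSigma (w : V ⊕ U) : MeasurableSpace W.Ω :=
  MeasurableSpace.comap (W.err w) inferInstance

theorem isStructuralFamily : IsStructuralFamily Edge W.vertexSigma W.errSigma :=
  W.sep

def replaceLatent {Edge' : V ⊕ U → V ⊕ U → Prop} {𝒴' : U → Type}
    [∀ u, MeasurableSpace (𝒴' u)] (Y' : ∀ u, W.Ω → 𝒴' u)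
    (h : IsStructuralFamily Edge'
      (Sum.elim (W.vertexSigma ∘ .inl) fun u => MeasurableSpace.comap (Y' u) inferInstance)
      W.errSigma) :
    MarginWitness Edge' 𝒳 P where
  Ω := W.Ω
  mΩ := W.mΩ
  μ := W.μ
  prob := W.prob
  X := W.X
  𝒴 := 𝒴'
  Y := Y'
  err := W.err
  indep := W.indep
  sep := h
  marg := W.marg

theorem comap_observed_prodMk_latent (S : Set V) (u : U) :
    MeasurableSpace.comap (fun ω => ((fun v : S => W.X v ω), W.Y u ω)) inferInstance =
      (⨆ v ∈ S, W.vertexSigma (.inl v)) ⊔ W.vertexSigma (.inr u) := by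
  refine (MeasurableSpace.comap_prodMk (fun ω (v : S) => W.X v ω) (W.Y u)).trans ?_
  rw [MeasurableSpace.comap_process_pi, iSup_subtype']
  rfl

end MarginWitness

theorem stmt7_general {V : Type} (Edge : V ⊕ Unit → V ⊕ Unit → Prop)
    (hacyclic : ∀ w, ¬ Relation.TransGen Edge w w)
    (𝒳 : V → Type) [∀ v, MeasurableSpace (𝒳 v)]
    (P : MeasureTheory.Measure (∀ v, 𝒳 v)) :
    InMarginalModel Edge 𝒳 P ↔ InMarginalModel (exogenizedEdge Edge) 𝒳 P := by
  constructor
  · rintro ⟨W⟩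
    have hloop : ¬ Edge (.inr ()) (.inr ()) := fun h => hacyclic _ (.single h)
    exact ⟨W.replaceLatent (fun _ => W.err (.inr ())) (W.isStructuralFamily.exogenize hloop)⟩
  · rintro ⟨W⟩
    refine ⟨W.replaceLatent
      (fun _ ω => ((fun v : {v | Edge (.inl v) (.inr ())} => W.X v ω), W.Y () ω)) ?_⟩
    simpa only [W.comap_observed_prodMk_latent] using W.isStructuralFamily.of_exogenize

/-- Exogenization preserves marginal models: if `D` is a DAG with vertices `V ∪ {u}` (the
latent vertex `u` being `Sum.inr ()`) and `r(D, u)` is the exogenized DAG at `u`, then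
`M(D, V) = M(r(D, u), V)`. -/
theorem stmt7 {V : Type} [Fintype V] (Edge : V ⊕ Unit → V ⊕ Unit → Prop)
    (hacyclic : ∀ w, ¬ Relation.TransGen Edge w w)
    (𝒳 : V → Type) [∀ v, MeasurableSpace (𝒳 v)]
    (P : MeasureTheory.Measure (∀ v, 𝒳 v)) :
    InMarginalModel Edge 𝒳 P ↔ InMarginalModel (exogenizedEdge Edge) 𝒳 P :=
  stmt7_general Edge hacyclic 𝒳 P
end

section
/- The bidirected faces of a latent projection form a simplicial complex: if G is an mDAG with vertex set V ∪ U, the collection B' of subsets W of V such that W shares a hidden common cause in G with respect to U contains all singletons of V and is closed under taking non-empty subsets. -/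
/-- An mDAG: an acyclic directed graph together with an abstract simplicial complex of
bidirected faces (all faces nonempty, all singletons present, closed under nonempty subsets). -/
structure MDAG (W : Type) where
  Edge : W → W → Prop
  Faces : Set (Set W)
  acyclic : ∀ w, ¬ Relation.TransGen Edge w w
  singleton_mem : ∀ w : W, {w} ∈ Faces
  nonempty_of_mem : ∀ B ∈ Faces, B.Nonempty
  down_closed : ∀ A B : Set W, A ⊆ B → A.Nonempty → B ∈ Faces → A ∈ Faces

/-- `projEdge Edge U a b`: there is a directed path from `a` to `b` (of length ≥ 1) with all
non-endpoint vertices in `U`.  This is the directed-edge relation of the latent projection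
that projects out `U`. -/
def projEdge {W : Type} (Edge : W → W → Prop) (U : Set W) (a b : W) : Prop :=
  ∃ c, Relation.ReflTransGen (fun x y => Edge x y ∧ y ∈ U) a c ∧ Edge c b

/-- `hcc Edge Faces U S`: the vertices of `S` share a hidden common cause with respect to `U`:
there is a bidirected face `B ⊆ U ∪ S` such that every `w ∈ S` is reached from some `b ∈ B`
by a directed path all of whose vertices lie in `U ∪ {w}`. -/
def hcc {W : Type} (Edge : W → W → Prop) (Faces : Set (Set W)) (U : Set W) (S : Set W) : Prop :=
  ∃ B ∈ Faces, B ⊆ U ∪ S ∧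
    ∀ w ∈ S, ∃ b ∈ B, Relation.ReflTransGen (fun x y => Edge x y ∧ x ∈ U) b w

/-- The bidirected faces of a latent projection form a simplicial complex: for an mDAG with
vertex set split into observed vertices `Uᶜ` and latent vertices `U`, the collection of
observed sets sharing a hidden common cause w.r.t. `U` contains every observed singleton and
is closed under nonempty subsets. -/
theorem stmt8 {W : Type} [Fintype W] (G : MDAG W) (U : Set W) :
    (∀ v, v ∉ U → hcc G.Edge G.Faces U {v}) ∧
    (∀ S T : Set W, S ⊆ T → S.Nonempty → T ⊆ Uᶜ →
      hcc G.Edge G.Faces U T → hcc G.Edge G.Faces U S) := by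
  constructor
  · intro v hv
    exact ⟨{v}, G.singleton_mem v, by simp, fun w hw => ⟨v, rfl, by
      rcases hw with rfl; exact Relation.ReflTransGen.refl⟩⟩
  · rintro S T hST hS hT ⟨B, hB, hBsub, hcov⟩
    refine ⟨B ∩ (U ∪ S), G.down_closed _ B Set.inter_subset_left ?_ hB,
      Set.inter_subset_right, ?_⟩
    · obtain ⟨w, hw⟩ := hS
      obtain ⟨b, hbB, hpath⟩ := hcov w (hST hw)
      refine ⟨b, hbB, ?_⟩
      rcases hpath.cases_head with rfl | ⟨c, ⟨_, hbU⟩, _⟩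
      · exact Or.inr hw
      · exact Or.inl hbU
    · intro w hw
      obtain ⟨b, hbB, hpath⟩ := hcov w (hST hw)
      refine ⟨b, ⟨hbB, ?_⟩, hpath⟩
      rcases hpath.cases_head with rfl | ⟨c, ⟨_, hbU⟩, _⟩
      · exact Or.inr hw
      · exact Or.inl hbU
end

section
/- If A is an ancestral set of vertices in an mDAG G, then the latent projection of G onto A equals the induced subgraph: p(G, A) = G_A. -/
/-! Every ancestor of a vertex of an ancestral set `A` lies in `A`, so no vertex of `Aᶜ` is an
ancestor of a vertex of `A`. Hence the latent parts of the paths defining `p(G, A)` are empty: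
a projected edge into `A` is an edge of `G`, and a face witnessing a hidden common cause of
`S ⊆ A` must contain `S`, so `S` is a face by downward closure. -/

def IsAncestral {V : Type} (r : V → V → Prop) (A : Set V) : Prop :=
  ∀ a ∈ A, ∀ v, Relation.ReflTransGen r v a → v ∈ A

namespace Relation.ReflTransGen

variable {V : Type} {r : V → V → Prop} {U : Set V} {a b : V}

theorem eq_of_tail_notMem (h : ReflTransGen (fun x y => r x y ∧ y ∈ U) a b) (hb : b ∉ U) :
    a = b := by
  rcases h.cases_tail with rfl | ⟨_, _, _, hbU⟩
  · rfl
  · exact absurd hbU hb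

theorem eq_of_head_notMem (h : ReflTransGen (fun x y => r x y ∧ x ∈ U) a b) (ha : a ∉ U) :
    a = b := by
  rcases h.cases_head with rfl | ⟨_, ⟨_, haU⟩, _⟩
  · rfl
  · exact absurd haU ha

end Relation.ReflTransGen

section LatentProjection

variable {V : Type} {r : V → V → Prop} {U A S : Set V}

theorem projEdge_iff_of_parents_notMem {a b : V} (hpa : ∀ c, r c b → c ∉ U) :
    projEdge r U a b ↔ r a b := by
  refine ⟨fun ⟨c, hac, hcb⟩ => ?_, fun h => ⟨a, .refl, h⟩⟩
  rwa [hac.eq_of_tail_notMem (hpa c hcb)]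

theorem hcc_of_mem {Faces : Set (Set V)} (hS : S ∈ Faces) : hcc r Faces U S :=
  ⟨S, hS, Set.subset_union_right, fun w hw => ⟨w, hw, .refl⟩⟩

theorem exists_superset_of_hcc {Faces : Set (Set V)} (h : hcc r Faces U S)
    (hanc : ∀ w ∈ S, ∀ v, Relation.ReflTransGen r v w → v ∉ U) : ∃ B ∈ Faces, S ⊆ B := by
  obtain ⟨B, hBF, -, hreach⟩ := h
  refine ⟨B, hBF, fun w hw => ?_⟩
  obtain ⟨b, hbB, hbw⟩ := hreach w hw
  have hbU : b ∉ U := hanc w hw b (Relation.ReflTransGen.mono (fun _ _ h => h.1) _ _ hbw)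
  rwa [← hbw.eq_of_head_notMem hbU]

theorem IsAncestral.projEdge_compl_iff (hA : IsAncestral r A) {a b : V} (hb : b ∈ A) :
    projEdge r Aᶜ a b ↔ r a b :=
  projEdge_iff_of_parents_notMem fun c hcb => not_not.mpr (hA b hb c (.single hcb))

theorem IsAncestral.hcc_compl_iff {G : MDAG V} (hA : IsAncestral G.Edge A) (hSA : S ⊆ A)
    (hS : S.Nonempty) : hcc G.Edge G.Faces Aᶜ S ↔ S ∈ G.Faces := by
  refine ⟨fun h => ?_, hcc_of_mem⟩
  obtain ⟨B, hBF, hSB⟩ :=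
    exists_superset_of_hcc h fun w hw v hvw => not_not.mpr (hA w (hSA hw) v hvw)
  exact G.down_closed S B hSB hS hBF

end LatentProjection

theorem stmt10_general {V : Type} (G : MDAG V) (A : Set V)
    (hanc : ∀ a ∈ A, ∀ v, Relation.ReflTransGen G.Edge v a → v ∈ A) :
    (∀ a ∈ A, ∀ b ∈ A, (projEdge G.Edge Aᶜ a b ↔ G.Edge a b)) ∧
    (∀ S : Set V, S ⊆ A → S.Nonempty →
      (hcc G.Edge G.Faces Aᶜ S ↔ S ∈ G.Faces)) :=
  ⟨fun _ _ _ hb => IsAncestral.projEdge_compl_iff hanc hb,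
    fun _ hSA hS => IsAncestral.hcc_compl_iff hanc hSA hS⟩

/-- If `A` is an ancestral set of vertices in an mDAG `G`, then the latent projection of `G`
onto `A` equals the induced subgraph `G_A`: projected directed edges between vertices of `A`
are exactly the edges of `G`, and the subsets of `A` sharing a hidden common cause w.r.t.
`Aᶜ` are exactly the bidirected faces of `G` contained in `A`. -/
theorem stmt10 {V : Type} [Fintype V] (G : MDAG V) (A : Set V)
    (hanc : ∀ a ∈ A, ∀ v, Relation.ReflTransGen G.Edge v a → v ∈ A) :
    (∀ a ∈ A, ∀ b ∈ A, (projEdge G.Edge Aᶜ a b ↔ G.Edge a b)) ∧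
    (∀ S : Set V, S ⊆ A → S.Nonempty →
      (hcc G.Edge G.Faces Aᶜ S ↔ S ∈ G.Faces)) :=
  stmt10_general G A hanc
end

section
/- Latent projection is monotone: if H is a subgraph of the mDAG G (same vertex set, with edges and bidirected faces of H contained in those of G), then for any subset W of vertices, p(H, W) is a subgraph of p(G, W). -/
theorem projEdge.mono {W : Type} {E E' : W → W → Prop} (hE : ∀ a b, E a b → E' a b)
    {U : Set W} {a b : W} : projEdge E U a b → projEdge E' U a b
  | ⟨c, hpath, hedge⟩ =>
    ⟨c, Relation.ReflTransGen.mono (fun x y h => ⟨hE x y h.1, h.2⟩) _ _ hpath, hE c b hedge⟩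

theorem hcc.mono {W : Type} {E E' : W → W → Prop} {F F' : Set (Set W)}
    (hE : ∀ a b, E a b → E' a b) (hF : F ⊆ F') {U S : Set W} :
    hcc E F U S → hcc E' F' U S
  | ⟨B, hB, hBS, hreach⟩ =>
    ⟨B, hF hB, hBS, fun w hw =>
      let ⟨b, hb, hpath⟩ := hreach w hw
      ⟨b, hb, Relation.ReflTransGen.mono (fun x y h => ⟨hE x y h.1, h.2⟩) _ _ hpath⟩⟩

theorem stmt11_general {W : Type} (G H : MDAG W) (U : Set W)
    (hE : ∀ a b, H.Edge a b → G.Edge a b) (hF : H.Faces ⊆ G.Faces) :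
    (∀ a b, projEdge H.Edge U a b → projEdge G.Edge U a b) ∧
    (∀ S : Set W, hcc H.Edge H.Faces U S → hcc G.Edge G.Faces U S) :=
  ⟨fun _ _ => projEdge.mono hE, fun _ => hcc.mono hE hF⟩

/-- Latent projection is monotone: if `H` is a subgraph of the mDAG `G` (same vertices,
edges and bidirected faces of `H` contained in those of `G`) then, projecting out any set
`U` of vertices, every directed edge of `p(H, Uᶜ)` is a directed edge of `p(G, Uᶜ)` and
every bidirected face of `p(H, Uᶜ)` is a bidirected face of `p(G, Uᶜ)`. -/
theorem stmt11 {W : Type} [Fintype W] (G H : MDAG W) (U : Set W)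
    (hE : ∀ a b, H.Edge a b → G.Edge a b) (hF : H.Faces ⊆ G.Faces) :
    (∀ a b, projEdge H.Edge U a b → projEdge G.Edge U a b) ∧
    (∀ S : Set W, hcc H.Edge H.Faces U S → hcc G.Edge G.Faces U S) :=
  stmt11_general G H U hE hF
end

section
/- Let G be an mDAG with vertex set V ∪ U1 ∪ U2, and H = p(G, V ∪ U1). For vertices a, b ∈ V, there is a directed path from a to b in G with all non-endpoint vertices in U1 ∪ U2 if and only if there is a directed path from a to b in H with all non-endpoint vertices in U1. -/
/-!
A path whose interior lies in `U₁ ∪ U₂` splits at its interior `U₁`-vertices into segments whose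
interiors lie in `U₂`; each segment is an edge of the projection that hides `U₂`, so the path
becomes a path in that projection with interior in `U₁`. Conversely, expanding every projected
edge back into its `U₂`-segment recovers a path with interior in `U₁ ∪ U₂`.
-/

namespace projEdge

variable {W : Type} {r : W → W → Prop} {U₁ U₂ : Set W}

theorem reflTransGen_into_mono {U U' : Set W} (h : U ⊆ U') {x y : W}
    (hxy : Relation.ReflTransGen (fun x y => r x y ∧ y ∈ U) x y) :
    Relation.ReflTransGen (fun x y => r x y ∧ y ∈ U') x y :=
  Relation.ReflTransGen.mono (fun _ _ ⟨he, hm⟩ => ⟨he, h hm⟩) _ _ hxy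

theorem exists_split_of_reflTransGen_into_union {a c : W}
    (hac : Relation.ReflTransGen (fun x y => r x y ∧ y ∈ U₁ ∪ U₂) a c) :
    ∃ d, Relation.ReflTransGen (fun x y => projEdge r U₂ x y ∧ y ∈ U₁) a d ∧
      Relation.ReflTransGen (fun x y => r x y ∧ y ∈ U₂) d c := by
  induction hac with
  | refl => exact ⟨a, .refl, .refl⟩
  | tail _ hstep ih =>
    obtain ⟨d, had, hdx⟩ := ih
    obtain ⟨he, hU₁ | hU₂⟩ := hstep
    · exact ⟨_, had.tail ⟨⟨_, hdx, he⟩, hU₁⟩, .refl⟩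
    · exact ⟨d, had, hdx.tail ⟨he, hU₂⟩⟩

theorem reflTransGen_into_union_of_reflTransGen_projEdge {a c : W}
    (hac : Relation.ReflTransGen (fun x y => projEdge r U₂ x y ∧ y ∈ U₁) a c) :
    Relation.ReflTransGen (fun x y => r x y ∧ y ∈ U₁ ∪ U₂) a c := by
  induction hac with
  | refl => exact .refl
  | tail _ hstep ih =>
    obtain ⟨⟨e, hxe, heb⟩, hU₁⟩ := hstep
    exact (ih.trans (reflTransGen_into_mono Set.subset_union_right hxe)).tail ⟨heb, .inl hU₁⟩

theorem union_iff {a b : W} :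
    projEdge r (U₁ ∪ U₂) a b ↔ projEdge (projEdge r U₂) U₁ a b := by
  constructor
  · rintro ⟨c, hac, hcb⟩
    obtain ⟨d, had, hdc⟩ := exists_split_of_reflTransGen_into_union hac
    exact ⟨d, had, c, hdc, hcb⟩
  · rintro ⟨c, hac, e, hce, heb⟩
    exact ⟨e, (reflTransGen_into_union_of_reflTransGen_projEdge hac).trans
      (reflTransGen_into_mono Set.subset_union_right hce), heb⟩

end projEdge

theorem stmt13_general {W : Type} (G : MDAG W) (U1 U2 : Set W)
    (a b : W) :
    projEdge G.Edge (U1 ∪ U2) a b ↔ projEdge (projEdge G.Edge U2) U1 a b :=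
  projEdge.union_iff

/-- Let `G` be an mDAG with vertices `V ∪ U₁ ∪ U₂` and `H = p(G, V ∪ U₁)` its latent
projection (so the edge relation of `H` is `projEdge G.Edge U₂`).  For observed `a, b ∈ V`,
there is a directed path from `a` to `b` in `G` with all non-endpoints in `U₁ ∪ U₂` iff
there is a directed path from `a` to `b` in `H` with all non-endpoints in `U₁`. -/
theorem stmt13 {W : Type} [Fintype W] (G : MDAG W) (U1 U2 : Set W) (hdisj : Disjoint U1 U2)
    (a b : W) (ha : a ∉ U1 ∪ U2) (hb : b ∉ U1 ∪ U2) :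
    projEdge G.Edge (U1 ∪ U2) a b ↔ projEdge (projEdge G.Edge U2) U1 a b :=
  stmt13_general G U1 U2 a b
end

section
/- Mutilation commutes with latent projection: if G = p(D, V) is the latent projection of a DAG D onto observed vertices V, and A ⊆ V, then the mutilated mDAG G_Ā equals the latent projection p(D_Ā, V) of the mutilated DAG. -/
/-- The face complex of a DAG: only the singletons. -/
def singFaces (W : Type) : Set (Set W) := {S | ∃ w : W, S = {w}}

/-! Since `A` consists of observed vertices, the intermediate vertices of a path through latent
vertices never lie in `A`, so mutilation only cuts paths whose last edge enters `A`. For the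
faces, a hidden common cause of `S` in the DAG is a single source vertex `b`; if `b` is observed
it reaches nothing but itself, which produces the singletons `{a}`, `a ∈ A`. -/

open Relation

section Mutilation

variable {W : Type} {Edge : W → W → Prop} {U A : Set W}

/-- The edge relation of the mutilated DAG `D_Ā`. -/
def mutilate (Edge : W → W → Prop) (A : Set W) (x y : W) : Prop :=
  Edge x y ∧ y ∉ A

lemma eq_of_reflTransGen_of_notMem {b w : W}
    (h : ReflTransGen (fun x y => Edge x y ∧ x ∈ U) b w) (hb : b ∉ U) : b = w := by
  rcases h.cases_head with rfl | ⟨_, hstep, _⟩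
  · rfl
  · exact absurd hstep.2 hb

lemma reflTransGen_mutilate_of_notMem (hA : A ⊆ Uᶜ) {b w : W}
    (h : ReflTransGen (fun x y => Edge x y ∧ x ∈ U) b w) (hw : w ∉ A) :
    ReflTransGen (fun x y => mutilate Edge A x y ∧ x ∈ U) b w := by
  induction h with
  | refl => exact .refl
  | tail _ hstep ih => exact .tail (ih fun hA' => hA hA' hstep.2) ⟨⟨hstep.1, hw⟩, hstep.2⟩

/-- Only the last vertex of a path through latent sources can lie in `A ⊆ Uᶜ`, so mutilation
removes exactly the nontrivial paths ending in `A`. -/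
lemma reflTransGen_mutilate_iff (hA : A ⊆ Uᶜ) {b w : W} :
    ReflTransGen (fun x y => mutilate Edge A x y ∧ x ∈ U) b w ↔
      ReflTransGen (fun x y => Edge x y ∧ x ∈ U) b w ∧ (w ∈ A → b = w) := by
  refine ⟨fun h => ⟨ReflTransGen.mono (fun _ _ hxy => ⟨hxy.1.1, hxy.2⟩) _ _ h, fun hw => ?_⟩, ?_⟩
  · rcases h.cases_tail with rfl | ⟨_, _, hstep⟩
    · rfl
    · exact absurd hw hstep.1.2
  · rintro ⟨h, hwA⟩
    by_cases hw : w ∈ A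
    · rw [hwA hw]
    · exact reflTransGen_mutilate_of_notMem hA h hw

lemma projEdge_mutilate_iff (hA : A ⊆ Uᶜ) {a b : W} :
    projEdge (mutilate Edge A) U a b ↔ projEdge Edge U a b ∧ b ∉ A := by
  have hlatent : (fun x y => mutilate Edge A x y ∧ y ∈ U) = fun x y => Edge x y ∧ y ∈ U := by
    ext x y
    exact ⟨fun h => ⟨h.1.1, h.2⟩, fun h => ⟨⟨h.1, fun hyA => hA hyA h.2⟩, h.2⟩⟩
  rw [projEdge, projEdge, hlatent]
  simp only [mutilate, ← and_assoc, exists_and_right]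

lemma hcc_singFaces_iff {S : Set W} :
    hcc Edge (singFaces W) U S ↔
      ∃ b ∈ U ∪ S, ∀ w ∈ S, ReflTransGen (fun x y => Edge x y ∧ x ∈ U) b w := by
  constructor
  · rintro ⟨_, ⟨b, rfl⟩, hb, hpaths⟩
    refine ⟨b, Set.singleton_subset_iff.mp hb, fun w hw => ?_⟩
    obtain ⟨_, rfl, hpath⟩ := hpaths w hw
    exact hpath
  · rintro ⟨b, hb, hpaths⟩
    exact ⟨{b}, ⟨b, rfl⟩, Set.singleton_subset_iff.mpr hb, fun w hw => ⟨b, rfl, hpaths w hw⟩⟩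

lemma hcc_mutilate_diff (hA : A ⊆ Uᶜ) {S : Set W} (hSU : S ⊆ Uᶜ) (hS : (S \ A).Nonempty)
    (h : hcc Edge (singFaces W) U S) : hcc (mutilate Edge A) (singFaces W) U (S \ A) := by
  obtain ⟨b, hb, hpaths⟩ := hcc_singFaces_iff.mp h
  refine hcc_singFaces_iff.mpr ⟨b, ?_, fun w hw =>
    (reflTransGen_mutilate_iff hA).mpr ⟨hpaths w hw.1, fun hwA => absurd hwA hw.2⟩⟩
  rcases hb with hbU | hbS
  · exact Or.inl hbU
  · obtain ⟨w, hw⟩ := hS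
    have hbw : b = w := eq_of_reflTransGen_of_notMem (hpaths w hw.1) (hSU hbS)
    exact Or.inr (hbw ▸ hw)

lemma hcc_mutilate_singFaces_iff (hA : A ⊆ Uᶜ) {S : Set W} (hSU : S ⊆ Uᶜ) (hS : S.Nonempty) :
    hcc (mutilate Edge A) (singFaces W) U S ↔
      (∃ S' : Set W, (S' ⊆ Uᶜ ∧ hcc Edge (singFaces W) U S') ∧ S = S' \ A) ∨
        ∃ a ∈ A, S = {a} := by
  constructor
  · intro h
    obtain ⟨b, hb, hpaths⟩ := hcc_singFaces_iff.mp h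
    have hpaths' := fun w hw => (reflTransGen_mutilate_iff hA).mp (hpaths w hw)
    by_cases hSA : Disjoint S A
    · refine Or.inl ⟨S, ⟨hSU, hcc_singFaces_iff.mpr ⟨b, hb, fun w hw => (hpaths' w hw).1⟩⟩, ?_⟩
      exact (sdiff_eq_left.mpr hSA).symm
    · obtain ⟨a, haS, haA⟩ := Set.not_disjoint_iff.mp hSA
      obtain rfl : b = a := (hpaths' a haS).2 haA
      -- the common source `b` is observed, so it reaches nothing but itself
      refine Or.inr ⟨b, haA, Set.eq_singleton_iff_unique_mem.mpr ⟨haS, fun w hw => ?_⟩⟩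
      exact (eq_of_reflTransGen_of_notMem (hpaths' w hw).1 (hA haA)).symm
  · rintro (⟨S', ⟨hS'U, h⟩, rfl⟩ | ⟨a, -, rfl⟩)
    · exact hcc_mutilate_diff hA hS'U hS h
    · exact hcc_singFaces_iff.mpr ⟨a, Or.inr rfl, by rintro w rfl; exact .refl⟩

end Mutilation

theorem stmt14_general {W : Type} (Edge : W → W → Prop)
    (U : Set W) (A : Set W) (hA : A ⊆ Uᶜ) :
    (∀ a b, a ∉ U → b ∉ U →
      ((projEdge Edge U a b ∧ b ∉ A) ↔ projEdge (fun x y => Edge x y ∧ y ∉ A) U a b)) ∧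
    (∀ S : Set W, S ⊆ Uᶜ → S.Nonempty →
      (hcc (fun x y => Edge x y ∧ y ∉ A) (singFaces W) U S ↔
        ((∃ S' : Set W, (S' ⊆ Uᶜ ∧ hcc Edge (singFaces W) U S') ∧ S = S' \ A) ∨
          ∃ a ∈ A, S = {a}))) :=
  ⟨fun _ _ _ _ => (projEdge_mutilate_iff hA).symm,
    fun _ hSU hS => hcc_mutilate_singFaces_iff hA hSU hS⟩

/-- Mutilation commutes with latent projection.  Let `D` be a DAG with vertices split into
observed `Uᶜ` and latent `U`, and let `A ⊆ Uᶜ`.  The mutilated DAG `D_Ā` has edge relation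
`fun x y => Edge x y ∧ y ∉ A`.  Then: (i) the directed edges of `p(D_Ā, Uᶜ)` are exactly the
directed edges of `p(D, Uᶜ)` not pointing into `A`; (ii) the bidirected faces of `p(D_Ā, Uᶜ)`
are exactly the sets `B' \ A` for bidirected faces `B'` of `p(D, Uᶜ)`, together with the
singletons `{a}`, `a ∈ A` — i.e. `p(D_Ā, Uᶜ) = (p(D, Uᶜ))_Ā`. -/
theorem stmt14 {W : Type} [Fintype W] (Edge : W → W → Prop)
    (hacyclic : ∀ w, ¬ Relation.TransGen Edge w w)
    (U : Set W) (A : Set W) (hA : A ⊆ Uᶜ) :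
    (∀ a b, a ∉ U → b ∉ U →
      ((projEdge Edge U a b ∧ b ∉ A) ↔ projEdge (fun x y => Edge x y ∧ y ∉ A) U a b)) ∧
    (∀ S : Set W, S ⊆ Uᶜ → S.Nonempty →
      (hcc (fun x y => Edge x y ∧ y ∉ A) (singFaces W) U S ↔
        ((∃ S' : Set W, (S' ⊆ Uᶜ ∧ hcc Edge (singFaces W) U S') ∧ S = S' \ A) ∨
          ∃ a ∈ A, S = {a}))) :=
  stmt14_general Edge U A hA
end

section
/- If two mDAGs G and H on vertex set V have distinct underlying DAGs, then there exists A ⊆ V such that the mutilated graphs G_Ā and H_Ā are DAGs (all bidirected faces trivial) and their edge sets differ; specifically, if v → w is an edge of G but not of H, taking A = V \ {w} works. -/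
/-- The directed edges of the mutilated mDAG `G_Ā`: edges of `G` not pointing into `A`. -/
def mutEdge {W : Type} (Edge : W → W → Prop) (A : Set W) (x y : W) : Prop :=
  Edge x y ∧ y ∉ A

/-- The bidirected faces of the mutilated mDAG `G_Ā`: the nonempty sets `B \ A` for faces
`B`, together with the singletons `{a}` for `a ∈ A`. -/
def mutFaces {W : Type} (Faces : Set (Set W)) (A : Set W) : Set (Set W) :=
  {S | (∃ B ∈ Faces, S = B \ A ∧ S.Nonempty) ∨ ∃ a ∈ A, S = {a}}

/-- If two mDAGs `G` and `H` on the same vertex set have distinct underlying DAGs — say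
`v → w` is an edge of `G` but not of `H` — then there is a set `A` (namely `A = V \ {w}`)
such that the mutilated graphs `G_Ā` and `H_Ā` are DAGs (all their bidirected faces are
trivial) and their directed edge sets differ (`v → w` is in `G_Ā` but not in `H_Ā`). -/
theorem stmt15 {V : Type} [Fintype V] (G H : MDAG V) (v w : V)
    (hG : G.Edge v w) (hH : ¬ H.Edge v w) :
    ∃ A : Set V, A = {w}ᶜ ∧
      (∀ S ∈ mutFaces G.Faces A, S.Subsingleton) ∧
      (∀ S ∈ mutFaces H.Faces A, S.Subsingleton) ∧
      mutEdge G.Edge A v w ∧ ¬ mutEdge H.Edge A v w := by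
  refine ⟨{w}ᶜ, rfl, ?_, ?_, ⟨hG, by simp⟩, fun h => hH h.1⟩ <;>
  · rintro S (⟨B, _, rfl, -⟩ | ⟨a, -, rfl⟩)
    · intro x hx y hy
      simp only [Set.mem_diff, Set.mem_compl_iff, Set.mem_singleton_iff, not_not] at hx hy
      rw [hx.2, hy.2]
    · exact Set.subsingleton_singleton
end

section
/- Let F_1, ..., F_k be independent sigma-algebras and X_1, ..., X_k square-integrable random variables such that each X_i is F^{−i}-measurable (F^{−i} generated by all F_j, j ≠ i). If E(X_i − X_j)² ≤ ε for all i, j, then the variance of each X_i is at most kε. -/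
/-!
Write `G T = ⨆ j ∈ T, F j` and `P T` for the `L²` projection onto `G T`-measurable functions. If
`j ∉ T`, then `X j` is measurable with respect to `F⁻ʲ`, which contains `G T` and is independent of
`F j`, so `E[X j | F j ⊔ G T] = E[X j | G T]`. Hence `(P (T ∪ {j}) - P T) (X i)` equals
`(P (T ∪ {j}) - P T) (X i - X j)`, has norm at most `‖X i - X j‖`, and is orthogonal to
`X i - P (T ∪ {j}) (X i)`; by Pythagoras, adding `F j` lowers `‖X i - P T (X i)‖²` by at most `ε`.
Adding all `k` σ-algebras one by one goes from `Var (X i)` (at `T = ∅`) to `0` (once `G T ⊇ F⁻ⁱ`).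
-/

open MeasureTheory ProbabilityTheory

namespace Submodule

variable {E : Type*} [NormedAddCommGroup E] [InnerProductSpace ℝ E]

theorem norm_sub_starProjection_sq_le_of_le {U V : Submodule ℝ E} [U.HasOrthogonalProjection]
    [V.HasOrthogonalProjection] (hUV : U ≤ V) {f g : E}
    (hg : V.starProjection g = U.starProjection g) :
    ‖f - U.starProjection f‖ ^ 2 ≤ ‖f - V.starProjection f‖ ^ 2 + ‖f - g‖ ^ 2 := by
  have hw : V.starProjection f - U.starProjection f =
      Uᗮ.starProjection (V.starProjection (f - g)) := by
    rw [starProjection_orthogonal_val, ← ContinuousLinearMap.comp_apply,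
      starProjection_comp_starProjection_of_le hUV, map_sub, map_sub, hg,
      sub_sub_sub_cancel_right]
  have horth : inner ℝ (f - V.starProjection f) (V.starProjection f - U.starProjection f) = 0 :=
    V.starProjection_inner_eq_zero f _
      (sub_mem (V.starProjection_apply_mem f) (hUV (U.starProjection_apply_mem f)))
  have hw_le : ‖V.starProjection f - U.starProjection f‖ ≤ ‖f - g‖ :=
    hw ▸ (Uᗮ.norm_starProjection_apply_le _).trans (V.norm_starProjection_apply_le _)
  rw [← sub_add_sub_cancel f (V.starProjection f), norm_add_sq_real, horth, mul_zero, add_zero]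
  gcongr

end Submodule

namespace MeasurableSpace

variable {Ω : Type*}

theorem sup_eq_generateFrom_image2_inter (m₁ m₂ : MeasurableSpace Ω) :
    m₁ ⊔ m₂ = generateFrom
      (Set.image2 (· ∩ ·) {a | MeasurableSet[m₁] a} {b | MeasurableSet[m₂] b}) := by
  refine le_antisymm (sup_le (fun a ha => ?_) fun b hb => ?_) (generateFrom_le ?_)
  · exact measurableSet_generateFrom ⟨a, ha, Set.univ, .univ, Set.inter_univ a⟩
  · exact measurableSet_generateFrom ⟨Set.univ, .univ, b, hb, Set.univ_inter b⟩
  · rintro _ ⟨a, ha, b, hb, rfl⟩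
    exact (le_sup_left (b := m₂) a ha).inter (le_sup_right (a := m₁) b hb)

theorem isPiSystem_image2_inter (m₁ m₂ : MeasurableSpace Ω) :
    IsPiSystem (Set.image2 (· ∩ ·) {a | MeasurableSet[m₁] a} {b | MeasurableSet[m₂] b}) := by
  rintro _ ⟨a, ha, b, hb, rfl⟩ _ ⟨a', ha', b', hb', rfl⟩ -
  exact ⟨a ∩ a', ha.inter ha', b ∩ b', hb.inter hb', Set.inter_inter_inter_comm a a' b b'⟩

end MeasurableSpace

namespace MeasureTheory

variable {Ω : Type*} {m₁ m₂ mX : MeasurableSpace Ω} [mΩ : MeasurableSpace Ω] {μ : Measure Ω}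

theorem Lp.norm_sub_sq_eq_integral {F G : Lp ℝ 2 μ} {f g : Ω → ℝ} (hF : F =ᵐ[μ] f)
    (hG : G =ᵐ[μ] g) : ‖F - G‖ ^ 2 = ∫ x, (f x - g x) ^ 2 ∂μ := by
  rw [← real_inner_self_eq_norm_sq, L2.inner_def]
  refine integral_congr_ae ?_
  filter_upwards [Lp.coeFn_sub F G, hF, hG] with x hsub hFx hGx
  rw [hsub, Pi.sub_apply, hFx, hGx, real_inner_self_eq_norm_sq, Real.norm_eq_abs, sq_abs]

theorem lpMeas_mono (h : m₁ ≤ m₂) : lpMeas ℝ ℝ m₁ 2 μ ≤ lpMeas ℝ ℝ m₂ 2 μ := fun _ hF => by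
  rw [mem_lpMeas_iff_aestronglyMeasurable] at hF ⊢
  exact hF.mono h

variable [IsFiniteMeasure μ]

theorem MemLp.starProjection_lpMeas_ae_eq_condExp [Fact (m₁ ≤ mΩ)] {f : Ω → ℝ}
    (hf : MemLp f 2 μ) : (lpMeas ℝ ℝ m₁ 2 μ).starProjection (hf.toLp f) =ᵐ[μ] μ[f | m₁] :=
  hf.condExpL2_ae_eq_condExp Fact.out

theorem integral_sub_condExp_sq_le_of_le (h₁₂ : m₁ ≤ m₂) (h₂ : m₂ ≤ mΩ) {f g : Ω → ℝ}
    (hf : MemLp f 2 μ) (hg : MemLp g 2 μ) (hgcond : μ[g | m₂] =ᵐ[μ] μ[g | m₁]) :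
    ∫ x, (f x - μ[f | m₁] x) ^ 2 ∂μ ≤
      ∫ x, (f x - μ[f | m₂] x) ^ 2 ∂μ + ∫ x, (f x - g x) ^ 2 ∂μ := by
  have : Fact (m₁ ≤ mΩ) := ⟨h₁₂.trans h₂⟩
  have : Fact (m₂ ≤ mΩ) := ⟨h₂⟩
  have hPg : (lpMeas ℝ ℝ m₂ 2 μ).starProjection (hg.toLp g) =
      (lpMeas ℝ ℝ m₁ 2 μ).starProjection (hg.toLp g) :=
    Lp.ext (hg.starProjection_lpMeas_ae_eq_condExp.trans
      (hgcond.trans hg.starProjection_lpMeas_ae_eq_condExp.symm))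
  have key :=
    Submodule.norm_sub_starProjection_sq_le_of_le (lpMeas_mono h₁₂) (f := hf.toLp f) hPg
  rwa [Lp.norm_sub_sq_eq_integral hf.coeFn_toLp hf.starProjection_lpMeas_ae_eq_condExp,
    Lp.norm_sub_sq_eq_integral hf.coeFn_toLp hf.starProjection_lpMeas_ae_eq_condExp,
    Lp.norm_sub_sq_eq_integral hf.coeFn_toLp hg.coeFn_toLp] at key

theorem setIntegral_inter_eq_measureReal_mul_of_indep (hm₁ : m₁ ≤ mΩ) (hmX : mX ≤ mΩ)
    (hind : Indep m₁ mX μ) {a b : Set Ω} (ha : MeasurableSet[m₁] a) (hb : MeasurableSet[mX] b)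
    {h : Ω → ℝ} (hh : StronglyMeasurable[mX] h) (hint : Integrable h μ) :
    ∫ x in a ∩ b, h x ∂μ = μ.real a * ∫ x in b, h x ∂μ := by
  have hcond : μ[b.indicator h | m₁] =ᵐ[μ] fun _ => ∫ x, b.indicator h x ∂μ :=
    condExp_indep_eq hmX hm₁ (hh.indicator hb) hind.symm
  rw [← setIntegral_indicator (hmX b hb),
    ← setIntegral_condExp hm₁ (hint.indicator (hmX b hb)) ha,
    setIntegral_congr_ae (hm₁ a ha) (hcond.mono fun x hx _ => hx), setIntegral_const,
    integral_indicator (hmX b hb), smul_eq_mul]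

/-- By independence both sides have the same integral over every `a ∩ b` with `a ∈ m₁`, `b ∈ m₂`,
and these sets form a π-system generating `m₁ ⊔ m₂`. -/
theorem condExp_sup_ae_eq_condExp_of_indep (hm₁ : m₁ ≤ mΩ) (hmX : mX ≤ mΩ) (h₂X : m₂ ≤ mX)
    (hind : Indep m₁ mX μ) {f : Ω → ℝ} (hf : StronglyMeasurable[mX] f) (hfi : Integrable f μ) :
    μ[f | m₁ ⊔ m₂] =ᵐ[μ] μ[f | m₂] := by
  have hm₂ : m₂ ≤ mΩ := h₂X.trans hmX
  have hsup : m₁ ⊔ m₂ ≤ mΩ := sup_le hm₁ hm₂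
  have hν : ∀ g : Ω → ℝ, Integrable g μ → ∀ s, MeasurableSet[m₁ ⊔ m₂] s →
      (μ.withDensityᵥ g).trim hsup s = ∫ x in s, g x ∂μ := fun g hg s hs => by
    rw [VectorMeasure.trim_measurableSet_eq hsup hs, withDensityᵥ_apply hg (hsup s hs)]
  have hvec : (μ.withDensityᵥ (μ[f | m₂])).trim hsup = (μ.withDensityᵥ f).trim hsup := by
    refine VectorMeasure.ext_of_generateFrom _ ?_
      (MeasurableSpace.sup_eq_generateFrom_image2_inter m₁ m₂)
      (MeasurableSpace.isPiSystem_image2_inter m₁ m₂) ?_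
    · rintro _ ⟨a, ha, b, hb, rfl⟩
      have hab : MeasurableSet[m₁ ⊔ m₂] (a ∩ b) :=
        (le_sup_left (b := m₂) a ha).inter (le_sup_right (a := m₁) b hb)
      rw [hν _ integrable_condExp _ hab, hν _ hfi _ hab,
        setIntegral_inter_eq_measureReal_mul_of_indep hm₁ hmX hind ha (h₂X b hb)
          (stronglyMeasurable_condExp.mono h₂X) integrable_condExp,
        setIntegral_inter_eq_measureReal_mul_of_indep hm₁ hmX hind ha (h₂X b hb) hf hfi,
        setIntegral_condExp hm₂ hfi hb]
    · rw [hν _ integrable_condExp _ .univ, hν _ hfi _ .univ, setIntegral_univ, setIntegral_univ,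
        integral_condExp hm₂]
  refine (ae_eq_condExp_of_forall_setIntegral_eq hsup hfi
    (fun s _ _ => integrable_condExp.integrableOn) (fun s hs _ => ?_)
    (stronglyMeasurable_condExp.mono (le_sup_right : m₂ ≤ m₁ ⊔ m₂)).aestronglyMeasurable).symm
  rw [← hν _ integrable_condExp s hs, hvec, hν _ hfi s hs]

end MeasureTheory

namespace ProbabilityTheory

variable {Ω ι : Type*} [mΩ : MeasurableSpace Ω] {μ : Measure Ω} {F : ι → MeasurableSpace Ω}

theorem condExp_biSup_insert_ae_eq_of_iIndep [IsFiniteMeasure μ] [DecidableEq ι]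
    (hle : ∀ j, F j ≤ mΩ) (hindep : iIndep F μ) {S : Finset ι} {j : ι} (hj : j ∉ S) {g : Ω → ℝ}
    (hg : Measurable[⨆ l, ⨆ _ : l ≠ j, F l] g) (hgi : Integrable g μ) :
    μ[g | ⨆ l ∈ insert j S, F l] =ᵐ[μ] μ[g | ⨆ l ∈ S, F l] := by
  have hindj : Indep (F j) (⨆ l, ⨆ _ : l ≠ j, F l) μ := by
    simpa [iSup_iSup_eq_left] using indep_biSup_compl hle hindep {j}
  have hS : ⨆ l ∈ S, F l ≤ ⨆ l, ⨆ _ : l ≠ j, F l :=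
    iSup₂_mono' fun l hl => ⟨l, ne_of_mem_of_not_mem hl hj, le_rfl⟩
  rw [Finset.iSup_insert]
  exact condExp_sup_ae_eq_condExp_of_indep (hle j) (iSup₂_le fun l _ => hle l) hS hindj
    hg.stronglyMeasurable hgi

theorem variance_le_integral_sub_condExp_biSup_sq_add_sum [IsProbabilityMeasure μ]
    (hle : ∀ j, F j ≤ mΩ) (hindep : iIndep F μ) {X : ι → Ω → ℝ} (hX : ∀ j, MemLp (X j) 2 μ)
    (hmeas : ∀ j, Measurable[⨆ l, ⨆ _ : l ≠ j, F l] (X j)) {f : Ω → ℝ} (hf : MemLp f 2 μ)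
    (T : Finset ι) :
    variance f μ ≤ ∫ x, (f x - μ[f | ⨆ j ∈ T, F j] x) ^ 2 ∂μ +
      ∑ j ∈ T, ∫ x, (f x - X j x) ^ 2 ∂μ := by
  classical
  induction T using Finset.induction_on with
  | empty =>
    simp only [Finset.notMem_empty, iSup_false, iSup_bot, condExp_bot, Finset.sum_empty,
      add_zero]
    exact (variance_eq_integral hf.aemeasurable).le
  | insert j T hj ih =>
    have hstep := integral_sub_condExp_sq_le_of_le
      (iSup₂_mono' fun l hl => ⟨l, Finset.mem_insert_of_mem hl, le_rfl⟩)
      (iSup₂_le fun l _ => hle l) hf (hX j)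
      (condExp_biSup_insert_ae_eq_of_iIndep hle hindep hj (hmeas j)
        ((hX j).integrable one_le_two))
    rw [Finset.sum_insert hj]
    linarith

end ProbabilityTheory

/-- Let `F 1, …, F k` be independent σ-algebras and `X 1, …, X k` square-integrable random
variables such that each `X i` is measurable with respect to `F⁻ⁱ = ⋁_{j ≠ i} F j`.  If
`E(Xᵢ − Xⱼ)² ≤ ε` for all `i, j`, then the variance of each `X i` is at most `k ε`. -/
theorem stmt17 {Ω : Type} [mΩ : MeasurableSpace Ω] (μ : Measure Ω)
    [IsProbabilityMeasure μ] {k : ℕ} (F : Fin k → MeasurableSpace Ω)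
    (hle : ∀ i, F i ≤ mΩ) (hindep : iIndep F μ)
    (X : Fin k → Ω → ℝ) (hX : ∀ i, MemLp (X i) 2 μ)
    (hmeas : ∀ i, Measurable[⨆ j, ⨆ _ : j ≠ i, F j] (X i)) (ε : ℝ)
    (hclose : ∀ i j, ∫ ω, (X i ω - X j ω) ^ 2 ∂μ ≤ ε) :
    ∀ i, variance (X i) μ ≤ k * ε := by
  intro i
  have hvar := variance_le_integral_sub_condExp_biSup_sq_add_sum hle hindep hX hmeas (hX i)
    Finset.univ
  have hself : μ[X i | ⨆ j ∈ Finset.univ, F j] = X i := by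
    refine condExp_of_stronglyMeasurable (iSup₂_le fun j _ => hle j) ?_
      ((hX i).integrable one_le_two)
    exact ((hmeas i).mono (iSup₂_mono' fun j _ => ⟨j, Finset.mem_univ j, le_rfl⟩) le_rfl)
      |>.stronglyMeasurable
  have hsum : ∑ j, ∫ ω, (X i ω - X j ω) ^ 2 ∂μ ≤ k * ε := by
    simpa using Finset.sum_le_card_nsmul Finset.univ _ ε fun j _ => hclose i j
  simp only [hself, sub_self, ne_eq, OfNat.ofNat_ne_zero, not_false_eq_true, zero_pow,
    integral_zero, zero_add] at hvar
  exact hvar.trans hsum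
end

section
/- There is no family of binary random variables X_1, X_2, X_3, each uniform on {0,1}, such that P(X_1 = X_2 = X_3) = 1, with the following structure: there exist independent sigma-algebras F_1, F_2, F_3 such that each X_i is measurable with respect to the sigma-algebra generated by the two F_j with j ≠ i. -/
/-!
Let `A i = {X i = true}` and let `M i` be the join of the `F j` with `j ≠ i`, so that
`A i ∈ M i` and `M i` is independent of `F i`. For `t₁ ∈ F 1` and `t₂ ∈ F 2`, replacing `A 0`
by the a.s. equal events `A 2 ∈ M 2` and then `A 1 ∈ M 1` splits off `t₂` and then `t₁`:
`P(A 0 ∩ t₁ ∩ t₂) = P(A 1) P(t₁) P(t₂) = P(A 0) P(t₁ ∩ t₂)`. Hence `A 0` is independent of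
`F 1 ⊔ F 2 = M 0`, which contains `A 0`, so `P(A 0) ∈ {0, 1}`, contradicting `P(A 0) = 1/2`.
-/

open MeasureTheory ProbabilityTheory MeasurableSpace Set

theorem isPiSystem_image2_inter {α : Type*} {C D : Set (Set α)} (hC : IsPiSystem C)
    (hD : IsPiSystem D) : IsPiSystem (image2 (· ∩ ·) C D) := by
  rintro _ ⟨s₁, hs₁, s₂, hs₂, rfl⟩ _ ⟨t₁, ht₁, t₂, ht₂, rfl⟩ hne
  rw [inter_inter_inter_comm] at hne ⊢
  exact mem_image2_of_mem (hC _ hs₁ _ ht₁ (hne.mono inter_subset_left))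
    (hD _ hs₂ _ ht₂ (hne.mono inter_subset_right))

theorem MeasurableSpace.sup_eq_generateFrom_image2_inter_s18 {α : Type*}
    (m₁ m₂ : MeasurableSpace α) :
    m₁ ⊔ m₂ =
      generateFrom (image2 (· ∩ ·) {s | MeasurableSet[m₁] s} {t | MeasurableSet[m₂] t}) := by
  refine le_antisymm (sup_le ?_ ?_) (generateFrom_le ?_)
  · exact fun s hs => measurableSet_generateFrom
      ⟨s, hs, univ, @MeasurableSet.univ _ m₂, inter_univ s⟩
  · exact fun t ht => measurableSet_generateFrom
      ⟨univ, @MeasurableSet.univ _ m₁, t, ht, univ_inter t⟩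
  · rintro _ ⟨s, hs, t, ht, rfl⟩
    exact (le_sup_left (b := m₂) _ hs).inter (le_sup_right (a := m₁) _ ht)

namespace ProbabilityTheory

variable {Ω : Type*} {mΩ : MeasurableSpace Ω} {μ : Measure Ω}

theorem iIndep.indep_iSup_ne {ι : Type*} {F : ι → MeasurableSpace Ω} (hle : ∀ i, F i ≤ mΩ)
    (hF : iIndep F μ) (i : ι) : Indep (⨆ j, ⨆ _ : j ≠ i, F j) (F i) μ := by
  simpa using indep_iSup_of_disjoint hle hF (S := {j | j ≠ i}) (T := {i}) (by simp)

theorem measure_inter_eq_mul_of_measurableSet_sup [IsZeroOrProbabilityMeasure μ]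
    {m₁ m₂ : MeasurableSpace Ω} (hm₁ : m₁ ≤ mΩ) (hm₂ : m₂ ≤ mΩ) {s : Set Ω}
    (hs : MeasurableSet[mΩ] s)
    (h : ∀ t₁ t₂, MeasurableSet[m₁] t₁ → MeasurableSet[m₂] t₂ →
      μ (s ∩ (t₁ ∩ t₂)) = μ s * μ (t₁ ∩ t₂))
    {t : Set Ω} (ht : MeasurableSet[m₁ ⊔ m₂] t) : μ (s ∩ t) = μ s * μ t := by
  have hind : Indep (generateFrom {s}) (m₁ ⊔ m₂) μ := by
    refine IndepSets.indep (generateFrom_le (by simpa using hs)) (sup_le hm₁ hm₂)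
      (IsPiSystem.singleton s) (isPiSystem_image2_inter (@isPiSystem_measurableSet _ m₁)
        (@isPiSystem_measurableSet _ m₂)) rfl (sup_eq_generateFrom_image2_inter_s18 m₁ m₂) ?_
    rw [IndepSets_iff]
    rintro _ _ rfl ⟨t₁, ht₁, t₂, ht₂, rfl⟩
    exact h t₁ t₂ ht₁ ht₂
  exact (Indep_iff _ _ _).1 hind s t (measurableSet_generateFrom rfl) ht

theorem measure_eq_zero_or_one_of_ae_eq_of_measurableSet_iSup_ne [IsZeroOrProbabilityMeasure μ]
    {F : Fin 3 → MeasurableSpace Ω} (hle : ∀ i, F i ≤ mΩ) (hF : iIndep F μ) {A : Fin 3 → Set Ω}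
    (hA : ∀ i, MeasurableSet[⨆ j, ⨆ _ : j ≠ i, F j] (A i))
    (h₀₁ : A 0 =ᵐ[μ] A 1) (h₁₂ : A 1 =ᵐ[μ] A 2) : μ (A 0) = 0 ∨ μ (A 0) = 1 := by
  have hF_le {j i : Fin 3} (h : j ≠ i) : F j ≤ ⨆ j, ⨆ _ : j ≠ i, F j :=
    le_iSup₂ (f := fun j _ => F j) j h
  have hM₀ : ⨆ j, ⨆ _ : j ≠ (0 : Fin 3), F j ≤ F 1 ⊔ F 2 :=
    iSup₂_le fun j hj => by fin_cases j <;> simp_all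
  have hA₀ : MeasurableSet (A 0) := iSup₂_le (fun j _ => hle j) _ (hA 0)
  have hcongr {B C : Set Ω} (h : B =ᵐ[μ] C) (t : Set Ω) : μ (B ∩ t) = μ (C ∩ t) :=
    measure_congr (h.inter Filter.EventuallyEq.rfl)
  have hrectangle (t₁ t₂ : Set Ω) (ht₁ : MeasurableSet[F 1] t₁) (ht₂ : MeasurableSet[F 2] t₂) :
      μ (A 0 ∩ (t₁ ∩ t₂)) = μ (A 0) * μ (t₁ ∩ t₂) := by
    have hA₂t₁ : MeasurableSet[⨆ j, ⨆ _ : j ≠ 2, F j] (A 2 ∩ t₁) :=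
      (hA 2).inter (hF_le (by decide) _ ht₁)
    calc μ (A 0 ∩ (t₁ ∩ t₂)) = μ (A 2 ∩ t₁ ∩ t₂) := by
          rw [hcongr (h₀₁.trans h₁₂), inter_assoc]
      _ = μ (A 2 ∩ t₁) * μ t₂ := (Indep_iff _ _ _).1 (hF.indep_iSup_ne hle 2) _ _ hA₂t₁ ht₂
      _ = μ (A 1) * μ t₁ * μ t₂ := by
          rw [← hcongr h₁₂, (Indep_iff _ _ μ).1 (hF.indep_iSup_ne hle 1) (A 1) t₁ (hA 1) ht₁]
      _ = μ (A 0) * μ (t₁ ∩ t₂) := by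
          rw [measure_congr h₀₁, mul_assoc,
            (Indep_iff _ _ _).1 (hF.indep (by decide)) _ _ ht₁ ht₂]
  refine measure_eq_zero_or_one_of_indepSet_self
    ((indepSet_iff_measure_inter_eq_mul hA₀ hA₀ μ).2 ?_)
  exact measure_inter_eq_mul_of_measurableSet_sup (hle 1) (hle 2) hA₀ hrectangle (hM₀ _ (hA 0))

end ProbabilityTheory

/-- There is no family of binary random variables `X 0, X 1, X 2`, each uniform on `{0,1}`,
agreeing almost surely (`P(X 0 = X 1 = X 2) = 1`), such that there exist independent
σ-algebras `F 0, F 1, F 2` with each `X i` measurable with respect to the σ-algebra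
generated by the two `F j` with `j ≠ i`. -/
theorem stmt18 :
    ¬ ∃ (Ω : Type) (mΩ : MeasurableSpace Ω) (μ : @Measure Ω mΩ)
        (_ : IsProbabilityMeasure μ)
        (F : Fin 3 → MeasurableSpace Ω) (X : Fin 3 → Ω → Bool),
      (∀ i, F i ≤ mΩ) ∧ iIndep F μ ∧
      (∀ i, Measurable[⨆ j, ⨆ _ : j ≠ i, F j] (X i)) ∧
      (∀ i, μ {ω | X i ω = true} = 1 / 2 ∧ μ {ω | X i ω = false} = 1 / 2) ∧
      μ {ω | X 0 ω = X 1 ω ∧ X 1 ω = X 2 ω} = 1 := by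
  rintro ⟨Ω, mΩ, μ, _, F, X, hle, hF, hX, hunif, hagree⟩
  have hXm (i : Fin 3) : Measurable (X i) := (hX i).mono (iSup₂_le fun j _ => hle j) le_rfl
  have hae : ∀ᵐ ω ∂μ, X 0 ω = X 1 ω ∧ X 1 ω = X 2 ω := by
    rw [ae_iff_measure_eq, hagree, measure_univ]
    exact ((measurableSet_eq_fun (hXm 0) (hXm 1)).inter
      (measurableSet_eq_fun (hXm 1) (hXm 2))).nullMeasurableSet
  have h₀₁ : {ω | X 0 ω = true} =ᵐ[μ] {ω | X 1 ω = true} :=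
    hae.mono fun ω h => show (X 0 ω = true) = (X 1 ω = true) by rw [h.1]
  have h₁₂ : {ω | X 1 ω = true} =ᵐ[μ] {ω | X 2 ω = true} :=
    hae.mono fun ω h => show (X 1 ω = true) = (X 2 ω = true) by rw [h.2]
  have h01 := measure_eq_zero_or_one_of_ae_eq_of_measurableSet_iSup_ne
    (A := fun i => {ω | X i ω = true}) hle hF (fun i => hX i (measurableSet_singleton true)) h₀₁ h₁₂
  simp [(hunif 0).1] at h01
end
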